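/- arXiv:2105.12616 — 4 statements merged into one kernel-verified Lean document; each statement's English description precedes it below -/
import Mathlib

section
/- If n = 4 then κ(0) < κ(1), κ(1) > κ(2) and κ(2) > κ(3). If n = 3 then κ(0) > κ(1) and κ(1) > κ(2). -/
open Finset

/-- `t = s^(e/2)` as a real number. -/
noncomputable def tval (s e : ℕ) : ℝ := (s : ℝ) ^ ((e : ℝ) / 2)

/-- `F(i,k) = ∏_{u=n−2i+k−1}^{n−i−2} (s^u·t + 1)`. -/
noncomputable def F (n s e : ℕ) (i k : ℤ) : ℝ :=
  ∏ u ∈ Finset.Icc ((n:ℤ) - 2*i + k - 1) ((n:ℤ) - i - 2), ((s:ℝ) ^ u * tval s e + 1)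

/-- `G(i,k) = s^{(i−k)²} · ∏_{v=1}^{k+1} (s^{i−k+v}−1)/(s^v−1)
  · ∏_{v=1}^{i−k} (s^{n−2i+k−1+v}−1)/(s^v−1)`. -/
noncomputable def G (n s : ℕ) (i k : ℤ) : ℝ :=
  (s:ℝ) ^ ((i - k)^2) *
  (∏ v ∈ Finset.Icc (1:ℤ) (k + 1), ((s:ℝ) ^ (i - k + v) - 1) / ((s:ℝ) ^ v - 1)) *
  (∏ v ∈ Finset.Icc (1:ℤ) (i - k), ((s:ℝ) ^ ((n:ℤ) - 2*i + k - 1 + v) - 1) / ((s:ℝ) ^ v - 1))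

/-- `κ(i) = Σ_{k = max(2i−n+1,−1)}^{i−1} F(i,k)·G(i,k)`, the degree of `(Δ_i, ⊥)`. -/
noncomputable def kappa (n s e : ℕ) (i : ℤ) : ℝ :=
  ∑ k ∈ Finset.Icc (max (2*i - (n:ℤ) + 1) (-1)) (i - 1), F n s e i k * G n s i k

section Aux

variable (s e : ℕ)

lemma k40 (h1 : (s:ℝ) - 1 ≠ 0) (h2 : (s:ℝ)^2 - 1 ≠ 0)
    (h3 : (1:ℝ) + (-(s:ℝ) - (s:ℝ)^2) + (s:ℝ)^3 ≠ 0) :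
    kappa 4 s e 0 = (s:ℝ) + s^2 + s^3 + s^3*tval s e + s^4*tval s e + s^5*tval s e := by
  simp only [kappa, F, G]
  norm_num [show Finset.Icc (-1:ℤ) 0 = {-1, 0} by decide,
    show Finset.Icc (1:ℤ) 2 = {1, 2} by decide, show Finset.Icc (0:ℤ) 1 = {0, 1} by decide, Finset.sum_insert, Finset.prod_insert, zpow_ofNat]
  field_simp
  ring

lemma k41 (h1 : (s:ℝ) - 1 ≠ 0) (h2 : (s:ℝ)^2 - 1 ≠ 0)
    (h3 : (1:ℝ) + (-(s:ℝ) - (s:ℝ)^2) + (s:ℝ)^3 ≠ 0) :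
    kappa 4 s e 1 = (s:ℝ) + 2*s^2 + s^2*tval s e + s^3 + 2*s^3*tval s e + s^4
      + 2*s^4*tval s e + s^5*tval s e + s^5*(tval s e)^2 := by
  simp only [kappa, F, G]
  norm_num [show Finset.Icc (-1:ℤ) 0 = {-1, 0} by decide,
    show Finset.Icc (1:ℤ) 2 = {1, 2} by decide, show Finset.Icc (0:ℤ) 1 = {0, 1} by decide, Finset.sum_insert, Finset.prod_insert, zpow_ofNat]
  field_simp
  ring

lemma k42 (h1 : (s:ℝ) - 1 ≠ 0) (h2 : (s:ℝ)^2 - 1 ≠ 0)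
    (h3 : (1:ℝ) + (-(s:ℝ) - (s:ℝ)^2) + (s:ℝ)^3 ≠ 0) :
    kappa 4 s e 2 = (s:ℝ) + s*tval s e + s^2 + s^2*tval s e + s^3 + s^3*tval s e := by
  simp only [kappa, F, G]
  norm_num [show Finset.Icc (-1:ℤ) 0 = {-1, 0} by decide,
    show Finset.Icc (1:ℤ) 2 = {1, 2} by decide, show Finset.Icc (0:ℤ) 1 = {0, 1} by decide, Finset.sum_insert, Finset.prod_insert, zpow_ofNat]
  field_simp
  ring

lemma k43 : kappa 4 s e 3 = 0 := by
  simp [kappa]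

lemma k30 (h1 : (s:ℝ) - 1 ≠ 0) (h2 : (s:ℝ)^2 - 1 ≠ 0)
    (h3 : (1:ℝ) + (-(s:ℝ) - (s:ℝ)^2) + (s:ℝ)^3 ≠ 0) :
    kappa 3 s e 0 = (s:ℝ) + s^2 + s^2*tval s e + s^3*tval s e := by
  simp only [kappa, F, G]
  norm_num [show Finset.Icc (-1:ℤ) 0 = {-1, 0} by decide,
    show Finset.Icc (1:ℤ) 2 = {1, 2} by decide, show Finset.Icc (0:ℤ) 1 = {0, 1} by decide, Finset.sum_insert, Finset.prod_insert, zpow_ofNat]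
  field_simp
  ring

lemma k31 (h1 : (s:ℝ) - 1 ≠ 0) (h2 : (s:ℝ)^2 - 1 ≠ 0)
    (h3 : (1:ℝ) + (-(s:ℝ) - (s:ℝ)^2) + (s:ℝ)^3 ≠ 0) :
    kappa 3 s e 1 = (s:ℝ) + s*tval s e + s^2 + s^2*tval s e := by
  simp only [kappa, F, G]
  norm_num [show Finset.Icc (-1:ℤ) 0 = {-1, 0} by decide,
    show Finset.Icc (1:ℤ) 2 = {1, 2} by decide, show Finset.Icc (0:ℤ) 1 = {0, 1} by decide, Finset.sum_insert, Finset.prod_insert, zpow_ofNat]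
  field_simp
  ring

lemma k32 : kappa 3 s e 2 = 0 := by
  simp [kappa]

end Aux

theorem stmt_13 (n s e : ℕ) (hs : 2 ≤ s) (he : e ≤ 4) :
    (n = 4 → kappa n s e 0 < kappa n s e 1 ∧ kappa n s e 1 > kappa n s e 2 ∧
      kappa n s e 2 > kappa n s e 3) ∧
    (n = 3 → kappa n s e 0 > kappa n s e 1 ∧ kappa n s e 1 > kappa n s e 2) := by
  have hS : (2:ℝ) ≤ (s:ℝ) := by exact_mod_cast hs
  have hSp : (0:ℝ) < (s:ℝ) := by linarith
  have h1 : (s:ℝ) - 1 ≠ 0 := by intro h; nlinarith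
  have h2 : (s:ℝ)^2 - 1 ≠ 0 := by intro h; nlinarith
  have h2' : (0:ℝ) < (s:ℝ)^2 - 1 := by nlinarith
  have h3 : (1:ℝ) + (-(s:ℝ) - (s:ℝ)^2) + (s:ℝ)^3 ≠ 0 := by nlinarith
  have hT : 0 < tval s e := Real.rpow_pos_of_pos hSp _
  set S := (s:ℝ)
  set T := tval s e with hTdef
  have hST := mul_pos hSp hT
  have hSST := mul_pos (mul_pos hSp hT) h2'
  constructor
  · intro hn; subst hn
    refine ⟨?_, ?_, ?_⟩
    · rw [k40 s e h1 h2 h3, k41 s e h1 h2 h3]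
      nlinarith [pow_pos hSp 2, pow_pos hSp 3, pow_pos hSp 4,
        mul_pos (pow_pos hSp 2) hT, mul_pos (pow_pos hSp 3) hT,
        mul_pos (pow_pos hSp 4) hT, mul_pos (pow_pos hSp 5) (mul_pos hT hT)]
    · rw [k41 s e h1 h2 h3, k42 s e h1 h2 h3]
      nlinarith [pow_pos hSp 2, pow_pos hSp 3, pow_pos hSp 4,
        mul_pos (pow_pos hSp 3) hT, mul_pos (pow_pos hSp 4) hT,
        mul_pos (pow_pos hSp 5) hT, mul_pos (pow_pos hSp 5) (mul_pos hT hT), hSST]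
    · rw [k42 s e h1 h2 h3, k43 s e]
      nlinarith [pow_pos hSp 2, pow_pos hSp 3, hST,
        mul_pos (pow_pos hSp 2) hT, mul_pos (pow_pos hSp 3) hT]
  · intro hn; subst hn
    refine ⟨?_, ?_⟩
    · rw [k30 s e h1 h2 h3, k31 s e h1 h2 h3]
      nlinarith [hSST]
    · rw [k31 s e h1 h2 h3, k32 s e]
      nlinarith [pow_pos hSp 2, hST, mul_pos (pow_pos hSp 2) hT]
end

section
/- Suppose n ≥ 5 − e/2 and let i, j be integers with 0 ≤ i < j ≤ ⌈(n−5+e/2)/3⌉. Then κ(i) < κ(j). -/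
open Finset

/-! For `i` in the range of the theorem the lower summation bound is `-1` both for `i` and for
`i + 1`, so `κ(i + 1)` has all the summands of `κ(i)` (with `i` replaced by `i + 1`) plus one
more positive one, and it suffices to compare `F(i,k) G(i,k)` with `F(i+1,k) G(i+1,k)`.
In the coordinates `m = n - 2i + k - 1`, `r = i - k` the step `i ↦ i + 1` sends `(m, r)` to
`(m - 2, r + 1)`. The `F`-product gains the factor `s^(m-2) t + 1` and loses at most `s^r`,
while the two Gaussian binomials in `G` change by explicit ratios of `q`-integers
`s^a - 1`. Bounding these ratios by powers of `s`, the whole summand grows by a factor of at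
least `t s^(2m+k-3-r)`, which is `≥ 1` because `6i + 11 ≤ 2n + e` below the ceiling bound. -/

/-- The Gaussian binomial coefficient `[a + N choose N]_q`. -/
noncomputable def qBinom {𝕜 : Type*} [Field 𝕜] (q : 𝕜) (a N : ℕ) : 𝕜 :=
  ∏ j ∈ range N, (q ^ (a + j + 1) - 1) / (q ^ (j + 1) - 1)

section qBinom

variable {𝕜 : Type*} [Field 𝕜]

lemma qBinom_eq_div (q : 𝕜) (a N : ℕ) :
    qBinom q a N = (∏ j ∈ range N, (q ^ (a + j + 1) - 1)) / ∏ j ∈ range N, (q ^ (j + 1) - 1) :=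
  prod_div_distrib _ _

lemma qBinom_succ_left_mul (q : 𝕜) (a N : ℕ) :
    qBinom q (a + 1) N * (q ^ (a + 1) - 1) = qBinom q a N * (q ^ (a + N + 1) - 1) := by
  have hnum : (∏ j ∈ range N, (q ^ (a + 1 + j + 1) - 1)) * (q ^ (a + 1) - 1)
      = (∏ j ∈ range N, (q ^ (a + j + 1) - 1)) * (q ^ (a + N + 1) - 1) := by
    rw [← prod_range_succ, prod_range_succ' (fun j ↦ q ^ (a + j + 1) - 1)]
    simp only [add_zero, ← add_assoc, add_right_comm a 1]
  rw [qBinom_eq_div, qBinom_eq_div, div_mul_eq_mul_div, div_mul_eq_mul_div, hnum]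

lemma qBinom_succ_mul {q : 𝕜} {N : ℕ} (hq : q ^ (N + 1) ≠ 1) (a : ℕ) :
    qBinom q a (N + 1) * (q ^ (N + 1) - 1) = qBinom q (a + 1) N * (q ^ (a + 1) - 1) := by
  rw [qBinom_eq_div, qBinom_eq_div, prod_range_succ' (fun j ↦ q ^ (a + j + 1) - 1),
    prod_range_succ (fun j ↦ q ^ (j + 1) - 1), div_mul_eq_mul_div,
    mul_div_mul_right _ _ (sub_ne_zero.2 hq), div_mul_eq_mul_div]
  simp only [add_zero, ← add_assoc, add_right_comm a 1]

lemma qBinom_pos [LinearOrder 𝕜] [IsStrictOrderedRing 𝕜] {q : 𝕜} (hq : 1 < q) (a N : ℕ) :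
    0 < qBinom q a N :=
  prod_pos fun _ _ ↦ div_pos (sub_pos.2 (one_lt_pow₀ hq (by omega)))
    (sub_pos.2 (one_lt_pow₀ hq (by omega)))

end qBinom

lemma prod_mul_add_one_le_pow_card_mul_prod {ι R : Type*} [CommSemiring R] [PartialOrder R]
    [IsOrderedRing R] (s : Finset ι) {q : R} (hq : 1 ≤ q) {x : ι → R} (hx : ∀ i ∈ s, 0 ≤ x i) :
    ∏ i ∈ s, (q * x i + 1) ≤ q ^ s.card * ∏ i ∈ s, (x i + 1) := by
  rw [← prod_const, ← prod_mul_distrib]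
  refine prod_le_prod (fun i hi ↦ add_nonneg (mul_nonneg (zero_le_one.trans hq) (hx i hi))
    zero_le_one) fun i _ ↦ ?_
  rw [mul_add, mul_one]
  gcongr

lemma pow_mul_sub_one_le_pow_mul_sub_one {R : Type*} [CommRing R] [PartialOrder R]
    [IsOrderedRing R] {q : R} (hq : 1 ≤ q) {a b c d : ℕ} (hca : c ≤ a) (h : a + b = c + d) :
    q ^ a * (q ^ b - 1) ≤ q ^ c * (q ^ d - 1) := by
  rw [mul_sub, mul_sub, ← pow_add, ← pow_add, h, mul_one, mul_one]
  exact sub_le_sub_left (pow_le_pow_right₀ hq hca) _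

lemma tval_pos {s : ℕ} (hs : 0 < s) (e : ℕ) : 0 < tval s e :=
  Real.rpow_pos_of_pos (Nat.cast_pos.2 hs) _

lemma tval_sq (s e : ℕ) : tval s e ^ 2 = (s : ℝ) ^ e := by
  rw [tval, ← Real.rpow_natCast, ← Real.rpow_mul (Nat.cast_nonneg s), ← Real.rpow_natCast]
  norm_num

lemma pow_le_tval_mul_pow {s : ℕ} (hs : 0 < s) {e a b : ℕ} (h : 2 * a ≤ e + 2 * b) :
    (s : ℝ) ^ a ≤ tval s e * (s : ℝ) ^ b := by
  rw [← pow_le_pow_iff_left₀ (by positivity) (by have := tval_pos hs e; positivity)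
    two_ne_zero, mul_pow, tval_sq, ← pow_mul, ← pow_mul, ← pow_add]
  exact pow_le_pow_right₀ (Nat.one_le_cast.2 hs) (by omega)

lemma prod_Icc_eq_prod_range {β : Type*} [CommMonoid β] (f : ℤ → β) {a b : ℤ} {N : ℕ}
    (h : b + 1 - a = N) : ∏ u ∈ Icc a b, f u = ∏ j ∈ range N, f (a + j) := by
  rw [Int.Icc_eq_finset_map, prod_map, h, Int.toNat_natCast]
  rfl

/-! `F` and `G` in the coordinates `m = n - 2i + k - 1`, `r = i - k`, `K = k + 1`
(see `F_eq_Fmr`, `G_eq_Gmr`), in which all exponents are natural numbers. -/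

noncomputable def Fmr (S t : ℝ) (m r : ℕ) : ℝ :=
  ∏ j ∈ range r, (S ^ (m + j) * t + 1)

noncomputable def Gmr (S : ℝ) (m r K : ℕ) : ℝ :=
  S ^ (r ^ 2) * qBinom S r K * qBinom S m r

section coordinates

variable {n s e : ℕ} {i k : ℤ}

lemma F_eq_Fmr {m r : ℕ} (hm : (n : ℤ) - 2 * i + k - 1 = m) (hr : i - k = r) :
    F n s e i k = Fmr s (tval s e) m r := by
  rw [F, prod_Icc_eq_prod_range (N := r) _ (by omega), hm, Fmr]
  refine prod_congr rfl fun j _ ↦ ?_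
  rw [← Nat.cast_add, zpow_natCast]

lemma G_eq_Gmr {m r K : ℕ} (hm : (n : ℤ) - 2 * i + k - 1 = m) (hr : i - k = r)
    (hK : k + 1 = K) : G n s i k = Gmr s m r K := by
  rw [G, prod_Icc_eq_prod_range (β := ℝ) (N := K) _ (by omega),
    prod_Icc_eq_prod_range (β := ℝ) (N := r) _ (by omega), hm, hr, ← Nat.cast_pow,
    zpow_natCast, Gmr, qBinom, qBinom]
  simp only [← Nat.cast_one (R := ℤ), ← Nat.cast_add, zpow_natCast, add_comm 1, ← add_assoc]

lemma F_pos (hs : 0 < s) (i k : ℤ) : 0 < F n s e i k :=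
  prod_pos fun _ _ ↦ add_pos (mul_pos (zpow_pos (Nat.cast_pos.2 hs) _) (tval_pos hs e)) one_pos

lemma G_pos (hs : 2 ≤ s) (hk : -1 ≤ k) (hki : k ≤ i) (hm : 0 ≤ (n : ℤ) - 2 * i + k - 1) :
    0 < G n s i k := by
  have hs1 : (1 : ℝ) < s := by exact_mod_cast hs
  rw [G_eq_Gmr (m := ((n : ℤ) - 2 * i + k - 1).toNat) (r := (i - k).toNat)
    (K := (k + 1).toNat) (by omega) (by omega) (by omega)]
  exact mul_pos (mul_pos (by positivity) (qBinom_pos hs1 _ _)) (qBinom_pos hs1 _ _)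

end coordinates

section step

variable {S t : ℝ} {M R K : ℕ}

lemma Fmr_pos (hS : 0 < S) (ht : 0 < t) (m r : ℕ) : 0 < Fmr S t m r :=
  prod_pos fun _ _ ↦ by positivity

lemma Fmr_mul_le (hS : 1 ≤ S) (ht : 0 ≤ t) :
    Fmr S t (M + 2) R * (S ^ M * t + 1) ≤ S ^ R * Fmr S t M (R + 1) := by
  have hshift : Fmr S t (M + 2) R = ∏ j ∈ range R, (S * (S ^ (M + (j + 1)) * t) + 1) :=
    prod_congr rfl fun j _ ↦ by ring
  rw [hshift, Fmr, prod_range_succ', add_zero, ← mul_assoc]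
  gcongr
  simpa using prod_mul_add_one_le_pow_card_mul_prod (range R) hS
    (x := fun j ↦ S ^ (M + (j + 1)) * t) fun j _ ↦ by positivity

lemma Gmr_succ_mul (hS : 1 < S) :
    Gmr S M (R + 1) K * ((S ^ (R + 1) - 1) ^ 2 * (S ^ (M + R + 2) - 1))
      = S ^ (2 * R + 1) * ((S ^ (R + K + 1) - 1) * (S ^ (M + 1) - 1) * (S ^ (M + 2) - 1))
        * Gmr S (M + 2) R K := by
  have h₁ := qBinom_succ_left_mul S R K
  have h₂ := qBinom_succ_mul (one_lt_pow₀ hS (n := R + 1) (by omega)).ne' M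
  have h₃ := qBinom_succ_left_mul S (M + 1) R
  rw [show M + 1 + 1 = M + 2 by ring, show M + 1 + R + 1 = M + R + 2 by ring] at h₃
  rw [Gmr, Gmr]
  linear_combination
    (S ^ ((R + 1) ^ 2) * qBinom S M (R + 1) * (S ^ (R + 1) - 1) * (S ^ (M + R + 2) - 1)) * h₁
    + (S ^ ((R + 1) ^ 2) * qBinom S R K * (S ^ (R + K + 1) - 1) * (S ^ (M + R + 2) - 1)) * h₂
    - (S ^ (2 * R + 1) * S ^ (R ^ 2) * qBinom S R K * (S ^ (R + K + 1) - 1)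
        * (S ^ (M + 1) - 1)) * h₃

lemma succ_factors_lt (hS : 2 ≤ S) (ht : 0 < t) (hRM : R ≤ M + 1)
    (hkey : S ^ R ≤ t * S ^ (2 * M + K)) :
    S ^ R * ((S ^ (R + 1) - 1) ^ 2 * (S ^ (M + R + 2) - 1))
      < (S ^ M * t + 1)
        * (S ^ (2 * R + 1) * ((S ^ (R + K + 1) - 1) * (S ^ (M + 1) - 1) * (S ^ (M + 2) - 1))) := by
  have hS1 : 1 ≤ S := by linarith
  have hx : 0 < S ^ (R + 1) - 1 := sub_pos.2 (one_lt_pow₀ (by linarith) (by omega))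
  have hK : S ^ K * (S ^ (R + 1) - 1) ≤ S ^ (R + K + 1) - 1 := by
    simpa using pow_mul_sub_one_le_pow_mul_sub_one hS1 (a := K) (b := R + 1) (c := 0)
      (d := R + K + 1) (Nat.zero_le K) (by ring)
  have hM : S ^ M ≤ S ^ (M + 1) - 1 := by
    rw [pow_succ]
    nlinarith [one_le_pow₀ hS1 (n := M)]
  have hRM' : S ^ (M + 1) * (S ^ (R + 1) - 1) ≤ S ^ R * (S ^ (M + 2) - 1) :=
    pow_mul_sub_one_le_pow_mul_sub_one hS1 hRM (by ring)
  refine lt_of_mul_lt_mul_left ?_ (pow_nonneg (zero_le_one.trans hS1) R)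
  calc S ^ R * (S ^ R * ((S ^ (R + 1) - 1) ^ 2 * (S ^ (M + R + 2) - 1)))
      < S ^ R * (S ^ R * ((S ^ (R + 1) - 1) ^ 2 * S ^ (M + R + 2))) := by gcongr; linarith
    _ = (S ^ (R + 1) - 1) ^ 2 * S ^ (M + 2 * R + 2) * S ^ R := by ring
    _ ≤ (S ^ (R + 1) - 1) ^ 2 * S ^ (M + 2 * R + 2) * (t * S ^ (2 * M + K)) := by gcongr
    _ = S ^ M * t * S ^ (2 * R + 1) * (S ^ K * (S ^ (R + 1) - 1)) * S ^ M
          * (S ^ (M + 1) * (S ^ (R + 1) - 1)) := by ring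
    _ ≤ (S ^ M * t + 1) * S ^ (2 * R + 1) * (S ^ (R + K + 1) - 1) * (S ^ (M + 1) - 1)
          * (S ^ R * (S ^ (M + 2) - 1)) := by
          have hK₀ : 0 ≤ S ^ (R + K + 1) - 1 := (mul_pos (by positivity) hx).le.trans hK
          have hM₀ : 0 ≤ S ^ (M + 1) - 1 := (pow_nonneg (by positivity) M).trans hM
          gcongr
          linarith
    _ = S ^ R * ((S ^ M * t + 1) * (S ^ (2 * R + 1)
          * ((S ^ (R + K + 1) - 1) * (S ^ (M + 1) - 1) * (S ^ (M + 2) - 1)))) := by ring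

lemma Fmr_mul_Gmr_lt_succ (hS : 2 ≤ S) (ht : 0 < t) (hRM : R ≤ M + 1)
    (hkey : S ^ R ≤ t * S ^ (2 * M + K)) :
    Fmr S t (M + 2) R * Gmr S (M + 2) R K < Fmr S t M (R + 1) * Gmr S M (R + 1) K := by
  have hS1 : 1 < S := by linarith
  have hF := Fmr_mul_le (M := M) (R := R) hS1.le ht.le
  have hG := Gmr_succ_mul (M := M) (R := R) (K := K) hS1
  have hfactors := succ_factors_lt hS ht hRM hkey
  have hGpos : 0 < Gmr S M (R + 1) K :=
    mul_pos (mul_pos (by positivity) (qBinom_pos hS1 _ _)) (qBinom_pos hS1 _ _)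
  have hFpos := Fmr_pos (by positivity) ht M (R + 1)
  set A := S ^ M * t + 1
  set B := S ^ (2 * R + 1) * ((S ^ (R + K + 1) - 1) * (S ^ (M + 1) - 1) * (S ^ (M + 2) - 1))
  set C := (S ^ (R + 1) - 1) ^ 2 * (S ^ (M + R + 2) - 1)
  have hC : 0 < C := by
    have := one_lt_pow₀ hS1 (n := R + 1) (by omega)
    have := one_lt_pow₀ hS1 (n := M + R + 2) (by omega)
    exact mul_pos (pow_pos (by linarith) 2) (by linarith)
  refine lt_of_mul_lt_mul_right ?_ (lt_of_le_of_lt (by positivity) hfactors).le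
  calc _ = (Fmr S t (M + 2) R * A) * (B * Gmr S (M + 2) R K) := by ring
    _ = (Fmr S t (M + 2) R * A) * (Gmr S M (R + 1) K * C) := by rw [hG]
    _ ≤ (S ^ R * Fmr S t M (R + 1)) * (Gmr S M (R + 1) K * C) := by gcongr
    _ = Fmr S t M (R + 1) * Gmr S M (R + 1) K * (S ^ R * C) := by ring
    _ < _ := by gcongr

end step

section kappa

variable {n s e : ℕ} {i : ℤ}

lemma F_mul_G_lt_succ (hs : 2 ≤ s) (he : e ≤ 4) (hi : 0 ≤ i) {k : ℤ} (hk : -1 ≤ k) (hki : k < i)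
    (hn : 6 * i + 11 ≤ 2 * n + e) :
    F n s e i k * G n s i k < F n s e (i + 1) k * G n s (i + 1) k := by
  obtain ⟨M, hM⟩ : ∃ M : ℕ, (n : ℤ) - 2 * i + k - 1 = M + 2 :=
    ⟨((n : ℤ) - 2 * i + k - 3).toNat, by omega⟩
  obtain ⟨R, hR⟩ : ∃ R : ℕ, i - k = R := ⟨(i - k).toNat, by omega⟩
  obtain ⟨K, hK⟩ : ∃ K : ℕ, k + 1 = K := ⟨(k + 1).toNat, by omega⟩
  rw [F_eq_Fmr (m := M + 2) (by push_cast; omega) hR,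
    G_eq_Gmr (m := M + 2) (by push_cast; omega) hR hK,
    F_eq_Fmr (m := M) (r := R + 1) (by omega) (by push_cast; omega),
    G_eq_Gmr (m := M) (r := R + 1) (by omega) (by push_cast; omega) hK]
  exact Fmr_mul_Gmr_lt_succ (by exact_mod_cast hs) (tval_pos (by omega) e) (by omega)
    (pow_le_tval_mul_pow (by omega) (by omega))

lemma kappa_lt_kappa_add_one (hs : 2 ≤ s) (he : e ≤ 4) (hi : 0 ≤ i)
    (hn : 6 * i + 11 ≤ 2 * n + e) : kappa n s e i < kappa n s e (i + 1) := by
  have hmin : ∀ l ≤ i + 1, max (2 * l - (n : ℤ) + 1) (-1) = -1 := fun l hl ↦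
    max_eq_right (by omega)
  rw [kappa, kappa, hmin i (by omega), hmin (i + 1) le_rfl, add_sub_cancel_right]
  calc ∑ k ∈ Icc (-1) (i - 1), F n s e i k * G n s i k
      < ∑ k ∈ Icc (-1) (i - 1), F n s e (i + 1) k * G n s (i + 1) k :=
        sum_lt_sum_of_nonempty (nonempty_Icc.2 (by omega)) fun k hk ↦ by
          rw [mem_Icc] at hk
          exact F_mul_G_lt_succ hs he hi hk.1 (by omega) hn
    _ ≤ ∑ k ∈ Icc (-1) i, F n s e (i + 1) k * G n s (i + 1) k :=
        sum_le_sum_of_subset_of_nonneg (Icc_subset_Icc_right (by omega)) fun k hk _ ↦ by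
          rw [mem_Icc] at hk
          exact (mul_pos (F_pos (by omega) _ _) (G_pos hs hk.1 (by omega) (by omega))).le

end kappa

lemma six_mul_add_eleven_le_of_lt_ceil {n e : ℕ} {l : ℤ}
    (h : l < ⌈((n : ℝ) - 5 + (e : ℝ) / 2) / 3⌉) : 6 * l + 11 ≤ 2 * n + e := by
  have hl : (l : ℝ) < ((n : ℝ) - 5 + (e : ℝ) / 2) / 3 := Int.lt_ceil.1 h
  have : 6 * l < 2 * n - 10 + e := by
    have : (6 * l : ℝ) < 2 * n - 10 + e := by linarith
    exact_mod_cast this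
  omega

theorem stmt_14_general (n s e : ℕ) (hs : 2 ≤ s) (he : e ≤ 4)
    (i j : ℤ) (hi : 0 ≤ i) (hij : i < j)
    (hj : j ≤ ⌈((n:ℝ) - 5 + (e:ℝ)/2) / 3⌉) :
    kappa n s e i < kappa n s e j := by
  have hmono : StrictMonoOn (kappa n s e) (Set.Icc i j) := by
    refine strictMonoOn_of_lt_succ Set.ordConnected_Icc fun l _ hl hl' ↦ ?_
    rw [Order.succ_eq_add_one] at hl' ⊢
    exact kappa_lt_kappa_add_one hs he (hi.trans hl.1)
      (six_mul_add_eleven_le_of_lt_ceil ((Int.add_one_le_iff.1 hl'.2).trans_le hj))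
  exact hmono (Set.left_mem_Icc.2 hij.le) (Set.right_mem_Icc.2 hij.le) hij

theorem stmt_14 (n s e : ℕ) (hs : 2 ≤ s) (he : e ≤ 4)
    (hn : 5 - (e:ℝ)/2 ≤ (n:ℝ))
    (i j : ℤ) (hi : 0 ≤ i) (hij : i < j)
    (hj : j ≤ ⌈((n:ℝ) - 5 + (e:ℝ)/2) / 3⌉) :
    kappa n s e i < kappa n s e j :=
  stmt_14_general n s e hs he i j hi hij hj
end

section
/- Suppose n ≥ 5 and let i be an integer with 0 ≤ i < (n−5+e/2)/3, and let k be an integer with −1 ≤ k ≤ i−1. Then F(i+1,k)·G(i+1,k) ≥ F(i,k)·G(i,k). -/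
open Finset

set_option maxHeartbeats 1000000

open Finset

lemma IccIco (x y : ℤ) : Finset.Icc x y = Finset.Ico x (y+1) := rfl

lemma prodIcoSingle (f : ℤ → ℝ) (c : ℤ) : ∏ x ∈ Finset.Ico c (c+1), f x = f c := by
  rw [show Finset.Ico c (c+1) = Finset.Icc c c from rfl, Finset.Icc_self, Finset.prod_singleton]

lemma prodIcoBot (f : ℤ → ℝ) {x c : ℤ} (h : x < c) :
    ∏ w ∈ Finset.Ico x c, f w = f x * ∏ w ∈ Finset.Ico (x+1) c, f w := by
  rw [← Finset.Ico_union_Ico_eq_Ico (by omega : x ≤ x+1) (by omega : x+1 ≤ c),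
    Finset.prod_union (Finset.Ico_disjoint_Ico_consecutive _ _ _), prodIcoSingle]

lemma prodIcoTop (f : ℤ → ℝ) {x c : ℤ} (h : x ≤ c) :
    ∏ w ∈ Finset.Ico x (c+1), f w = (∏ w ∈ Finset.Ico x c, f w) * f c := by
  rw [← Finset.Ico_union_Ico_eq_Ico h (by omega : c ≤ c+1),
    Finset.prod_union (Finset.Ico_disjoint_Ico_consecutive _ _ _), prodIcoSingle]

lemma le_zpow' {q : ℝ} (hq : 2 ≤ q) {N : ℤ} {j : ℕ} (h : (j:ℤ) ≤ N) : (2:ℝ)^j ≤ q^N := by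
  calc (2:ℝ)^j ≤ q^j := pow_le_pow_left₀ (by norm_num) hq j
    _ = q^(j:ℤ) := (zpow_natCast q j).symm
    _ ≤ q^N := zpow_le_zpow_right₀ (by linarith) h

lemma scalar_key (q t : ℝ) (hq : 2 ≤ q) (ht1 : 1 ≤ t) (e : ℕ) (htt : t*t = q^(e:ℤ))
    (a m i : ℤ) (hm : 1 ≤ m) (ha : 2 ≤ a) (hmi : m + 1 ≤ i + 2)
    (h1 : 6 ≤ 2*(a+m-1)+(e:ℤ)) (h2 : 4 ≤ 2*(2*a-m-3)+(e:ℤ)) :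
    (q^(a+m-1)*t+1) * ((q^(a+m)-1) * ((q^(m+1)-1) * (q^(m+1)-1))) ≤
    (q^(a-2)*t+1) * ((q^(a-1)*t+1) * (q^(2*m+1) * ((q^(i+2)-1) * ((q^(a-1)-1) * (q^a-1))))) := by
  have hq0 : (0:ℝ) < q := by linarith
  have hq1 : (1:ℝ) < q := by linarith
  have ht0 : (0:ℝ) < t := by linarith
  have hz : ∀ x y : ℤ, q^(x+y) = q^x * q^y := fun x y => zpow_add₀ (ne_of_gt hq0) x y
  have hqt : ∀ x : ℤ, 0 < q^x*t := fun x => mul_pos (zpow_pos hq0 x) ht0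
  -- w ≥ 8
  have hw8 : 8 ≤ q^(a+m-1)*t := by
    have e0 : (q^(a+m-1)*t)*(q^(a+m-1)*t) = q^((a+m-1)+((a+m-1)+(e:ℤ))) := by
      rw [hz, hz, ← htt]; ring
    have e1 : (64:ℝ) ≤ (q^(a+m-1)*t)*(q^(a+m-1)*t) := by
      rw [e0]
      calc (64:ℝ) = 2^6 := by norm_num
        _ ≤ q^((a+m-1)+((a+m-1)+(e:ℤ))) := le_zpow' hq (by omega)
    nlinarith [hqt (a+m-1)]
  have hw3 : 3 ≤ q^(2*a-m-3)*t := by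
    have e0 : (q^(2*a-m-3)*t)*(q^(2*a-m-3)*t) = q^((2*a-m-3)+((2*a-m-3)+(e:ℤ))) := by
      rw [hz, hz, ← htt]; ring
    have e1 : (16:ℝ) ≤ (q^(2*a-m-3)*t)*(q^(2*a-m-3)*t) := by
      rw [e0]
      calc (16:ℝ) = 2^4 := by norm_num
        _ ≤ q^((2*a-m-3)+((2*a-m-3)+(e:ℤ))) := le_zpow' hq (by omega)
    nlinarith [hqt (2*a-m-3)]
  have hIm : (0:ℝ) ≤ q^(m+1) - 1 := by
    have := one_lt_zpow₀ hq1 (show (0:ℤ) < m+1 by omega); linarith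
  have hIi : (0:ℝ) ≤ q^(i+2) - 1 := by
    have := one_lt_zpow₀ hq1 (show (0:ℤ) < i+2 by omega); linarith
  have hb5 : q^(m+1) - 1 ≤ q^(i+2) - 1 := by
    have := zpow_le_zpow_right₀ (le_of_lt hq1) hmi; linarith
  have hqa1 : (2:ℝ) ≤ q^(a-1) := by
    calc (2:ℝ) = 2^1 := by norm_num
      _ ≤ q^(a-1) := le_zpow' hq (by omega)
  have hqa : (4:ℝ) ≤ q^a := by
    calc (4:ℝ) = 2^2 := by norm_num
      _ ≤ q^a := le_zpow' hq (by omega)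
  have hb6 : q^(a-1)/2 ≤ q^(a-1) - 1 := by linarith
  have hb7 : 3/4*q^a ≤ q^a - 1 := by linarith
  have hb1 : q^(a+m-1)*t+1 ≤ 9/8*(q^(a+m-1)*t) := by linarith
  -- upper bound for LHS
  have hL : (q^(a+m-1)*t+1) * ((q^(a+m)-1) * ((q^(m+1)-1) * (q^(m+1)-1))) ≤
      (9/8*(q^(a+m-1)*t)) * (q^(a+m) * ((q^(i+2)-1) * q^(m+1))) := by
    have f2 : q^(a+m)-1 ≤ q^(a+m) := by linarith
    have f3 : (q^(m+1)-1)*(q^(m+1)-1) ≤ (q^(i+2)-1)*q^(m+1) := by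
      have hql : q^(m+1)-1 ≤ q^(m+1) := by linarith
      nlinarith [zpow_pos hq0 (m+1)]
    have inner : (q^(a+m)-1) * ((q^(m+1)-1)*(q^(m+1)-1)) ≤ q^(a+m) * ((q^(i+2)-1)*q^(m+1)) :=
      mul_le_mul f2 f3 (mul_nonneg hIm hIm) (le_of_lt (zpow_pos hq0 (a+m)))
    exact mul_le_mul hb1 inner
      (mul_nonneg (by linarith [one_lt_zpow₀ hq1 (show (0:ℤ) < a+m by omega)]) (mul_nonneg hIm hIm))
      (by nlinarith [hqt (a+m-1)])
  -- lower bound for RHS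
  have hR : (q^(a-2)*t) * ((q^(a-1)*t) * (q^(2*m+1) * ((q^(i+2)-1) * ((q^(a-1)/2) * (3/4*q^a))))) ≤
      (q^(a-2)*t+1) * ((q^(a-1)*t+1) * (q^(2*m+1) * ((q^(i+2)-1) * ((q^(a-1)-1) * (q^a-1))))) := by
    have g1 : (q^(a-1)/2) * (3/4*q^a) ≤ (q^(a-1)-1) * (q^a-1) :=
      mul_le_mul hb6 hb7 (by linarith [zpow_pos hq0 a]) (by linarith)
    have g2 : q^(2*m+1) * ((q^(i+2)-1) * ((q^(a-1)/2) * (3/4*q^a))) ≤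
        q^(2*m+1) * ((q^(i+2)-1) * ((q^(a-1)-1) * (q^a-1))) := by
      apply mul_le_mul_of_nonneg_left _ (le_of_lt (zpow_pos hq0 (2*m+1)))
      exact mul_le_mul_of_nonneg_left g1 hIi
    have g3 : (q^(a-1)*t) * (q^(2*m+1) * ((q^(i+2)-1) * ((q^(a-1)/2) * (3/4*q^a)))) ≤
        (q^(a-1)*t+1) * (q^(2*m+1) * ((q^(i+2)-1) * ((q^(a-1)-1) * (q^a-1)))) := by
      apply mul_le_mul (by linarith [hqt (a-1)]) g2
      · positivity
      · linarith [hqt (a-1)]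
    apply mul_le_mul (by linarith [hqt (a-2)]) g3
    · have : (0:ℝ) ≤ (q^(a-1)/2) * (3/4*q^a) := by positivity
      have h0 : (0:ℝ) ≤ q^(2*m+1) := le_of_lt (zpow_pos hq0 _)
      positivity
    · linarith [hqt (a-2)]
  -- middle comparison
  have epow : q^(a-2)*(q^(a-1)*(q^(2*m+1)*(q^(a-1)*q^a))) =
      q^(a+m-1)*(q^(a+m)*(q^(m+1)*q^(2*a-m-3))) := by
    simp only [← zpow_add₀ (ne_of_gt hq0)]
    congr 1
    ring
  have hM : (9/8*(q^(a+m-1)*t)) * (q^(a+m) * ((q^(i+2)-1) * q^(m+1))) ≤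
      (q^(a-2)*t) * ((q^(a-1)*t) * (q^(2*m+1) * ((q^(i+2)-1) * ((q^(a-1)/2) * (3/4*q^a))))) := by
    have base : (0:ℝ) ≤ (q^(a+m-1)*t) * (q^(a+m) * ((q^(i+2)-1) * q^(m+1))) :=
      mul_nonneg (le_of_lt (hqt _)) (mul_nonneg (le_of_lt (zpow_pos hq0 _))
        (mul_nonneg hIi (le_of_lt (zpow_pos hq0 _))))
    have step : (9/8*(q^(a+m-1)*t)) * (q^(a+m) * ((q^(i+2)-1) * q^(m+1))) ≤
        3/8 * ((q^(a+m-1)*t) * (q^(a+m) * ((q^(i+2)-1) * q^(m+1)))) * (q^(2*a-m-3)*t) := by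
      linarith [mul_nonneg base (by linarith [hw3] : (0:ℝ) ≤ q^(2*a-m-3)*t - 3)]
    have eq2 : 3/8 * ((q^(a+m-1)*t) * (q^(a+m) * ((q^(i+2)-1) * q^(m+1)))) * (q^(2*a-m-3)*t) =
        (q^(a-2)*t) * ((q^(a-1)*t) * (q^(2*m+1) * ((q^(i+2)-1) * ((q^(a-1)/2) * (3/4*q^a))))) := by
      linear_combination (-3/8*t*t*(q^(i+2)-1)) * epow
    linarith [step, eq2.ge, eq2.le]
  exact le_trans hL (le_trans hM hR)

theorem stmt_16 (n s e : ℕ) (hn : 5 ≤ n) (hs : 2 ≤ s) (he : e ≤ 4)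
    (i k : ℤ) (hi : 0 ≤ i) (hi' : (i:ℝ) < ((n:ℝ) - 5 + (e:ℝ)/2) / 3)
    (hk : -1 ≤ k) (hk' : k ≤ i - 1) :
    F n s e (i + 1) k * G n s (i + 1) k ≥ F n s e i k * G n s i k := by
  have hq2 : (2:ℝ) ≤ (s:ℝ) := by exact_mod_cast hs
  rw [ge_iff_le]
  simp only [F, G]
  set q := (s:ℝ) with hqdef
  set t := tval s e with htdef
  have hq0 : (0:ℝ) < q := by linarith
  have hq1 : (1:ℝ) < q := by linarith
  have ht1 : (1:ℝ) ≤ t := Real.one_le_rpow (by linarith) (by positivity)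
  have ht0 : (0:ℝ) < t := by linarith
  have htt : t * t = q ^ ((e:ℕ):ℤ) := by
    rw [htdef, tval, ← Real.rpow_add hq0]
    rw [show (e:ℝ)/2 + (e:ℝ)/2 = ((e:ℕ):ℝ) from by push_cast; ring]
    rw [Real.rpow_natCast, zpow_natCast]
  have h6 : 6*i ≤ 2*(n:ℤ) - 11 + (e:ℤ) := by
    have hr : (6*(i:ℝ)) < 2*(n:ℝ) - 10 + (e:ℝ) := by linarith
    have hzz : (6*i:ℤ) < 2*(n:ℤ) - 10 + (e:ℤ) := by exact_mod_cast hr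
    omega
  have hn5 : (5:ℤ) ≤ (n:ℤ) := by exact_mod_cast hn
  have he4 : (e:ℤ) ≤ 4 := by exact_mod_cast he
  set a := (n:ℤ) - 2*i + k - 1 with hadef
  set m := i - k with hmdef
  -- structural rewrites
  rw [show (i:ℤ) + 1 - k = m + 1 from by omega]
  rw [show ((m:ℤ)+1)^2 = m^2+(2*m+1) from by ring]
  rw [show (n:ℤ) - 2*(i+1) + k - 1 = a - 2 from by omega]
  rw [show (n:ℤ) - (i+1) - 2 = a + m - 2 from by omega]
  rw [show (n:ℤ) - i - 2 = a + m - 1 from by omega]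
  rw [IccIco a (a+m-1), prodIcoTop _ (show a ≤ a+m-1 by omega)]
  rw [IccIco (a-2) (a+m-2), prodIcoBot _ (show a-2 < a+m-2+1 by omega),
      show (a:ℤ)-2+1 = a-1 from by ring, prodIcoBot _ (show a-1 < a+m-2+1 by omega),
      show (a:ℤ)-1+1 = a from by ring, show (a:ℤ)+m-2+1 = a+m-1 from by ring]
  simp only [Finset.prod_div_distrib]
  -- product reindexing identities
  have mapL : ∀ c lo hi : ℤ, ∏ w ∈ Finset.map (addLeftEmbedding c) (Finset.Icc lo hi), (q^w-1)
      = ∏ x ∈ Finset.Icc lo hi, (q^(c+x)-1) := fun c lo hi => by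
    rw [Finset.prod_map]
    exact Finset.prod_congr rfl fun x _ => by rw [addLeftEmbedding_apply]
  have r2 : ∏ x ∈ Finset.Icc (1:ℤ) m, (q^(a+x)-1)
      = (∏ w ∈ Finset.Ico (a+1) (a+m), (q^w-1)) * (q^(a+m)-1) := by
    rw [← mapL a 1 m, Finset.map_add_left_Icc, IccIco (a+1) (a+m),
      prodIcoTop _ (show a+1 ≤ a+m by omega)]
  have r3 : ∏ x ∈ Finset.Icc (1:ℤ) (m+1), (q^(a-2+x)-1)
      = (q^(a-1)-1) * ((q^a-1) * ∏ w ∈ Finset.Ico (a+1) (a+m), (q^w-1)) := by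
    rw [← mapL (a-2) 1 (m+1), Finset.map_add_left_Icc,
      show (a:ℤ)-2+1 = a-1 from by ring, show (a:ℤ)-2+(m+1) = a+m-1 from by ring,
      IccIco (a-1) (a+m-1), show (a:ℤ)+m-1+1 = a+m from by ring,
      prodIcoBot _ (show a-1 < a+m by omega), show (a:ℤ)-1+1 = a from by ring,
      prodIcoBot _ (show a < a+m by omega)]
  have r4 : ∏ x ∈ Finset.Icc (1:ℤ) (m+1), (q^x-1)
      = (∏ x ∈ Finset.Icc (1:ℤ) m, (q^x-1)) * (q^(m+1)-1) := by
    rw [IccIco (1:ℤ) (m+1), prodIcoTop _ (show (1:ℤ) ≤ m+1 by omega), ← IccIco]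
  have rN' : ∏ x ∈ Finset.Icc (1:ℤ) (k+1), (q^(m+1+x)-1)
      = ∏ w ∈ Finset.Ico (m+2) (m+k+3), (q^w-1) := by
    rw [← mapL (m+1) 1 (k+1), Finset.map_add_left_Icc,
      show (m:ℤ)+1+1 = m+2 from by ring, show (m:ℤ)+1+(k+1) = m+k+2 from by ring,
      IccIco (m+2) (m+k+2), show (m:ℤ)+k+2+1 = m+k+3 from by ring]
  have rN : ∏ x ∈ Finset.Icc (1:ℤ) (k+1), (q^(m+x)-1)
      = ∏ w ∈ Finset.Ico (m+1) (m+k+2), (q^w-1) := by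
    rw [← mapL m 1 (k+1), Finset.map_add_left_Icc,
      show (m:ℤ)+(k+1) = m+k+1 from by ring,
      IccIco (m+1) (m+k+1), show (m:ℤ)+k+1+1 = m+k+2 from by ring]
  have eN : (∏ x ∈ Finset.Icc (1:ℤ) (k+1), (q^(m+1+x)-1)) * (q^(m+1)-1)
      = (∏ x ∈ Finset.Icc (1:ℤ) (k+1), (q^(m+x)-1)) * (q^(i+2)-1) := by
    have hsplit1 : ∏ w ∈ Finset.Ico (m+1) (m+k+3), (q^w-1)
        = (q^(m+1)-1) * ∏ w ∈ Finset.Ico (m+2) (m+k+3), (q^w-1) := by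
      rw [prodIcoBot _ (show m+1 < m+k+3 by omega), show (m:ℤ)+1+1 = m+2 from by ring]
    have hsplit2 : ∏ w ∈ Finset.Ico (m+1) (m+k+3), (q^w-1)
        = (∏ w ∈ Finset.Ico (m+1) (m+k+2), (q^w-1)) * (q^(m+k+2)-1) := by
      rw [show (m:ℤ)+k+3 = (m+k+2)+1 from by ring, prodIcoTop _ (show m+1 ≤ m+k+2 by omega)]
    rw [rN', rN, show (i:ℤ)+2 = m+k+2 from by omega]
    linarith [hsplit1, hsplit2]
  -- positivity facts
  have hone : ∀ x : ℤ, 0 < x → (0:ℝ) < q^x - 1 := fun x hx => by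
    have := one_lt_zpow₀ hq1 hx; linarith
  have hDk : 0 < ∏ x ∈ Finset.Icc (1:ℤ) (k+1), (q^x-1) :=
    Finset.prod_pos fun x hx => hone x (by have := (Finset.mem_Icc.mp hx).1; omega)
  have hDm : 0 < ∏ x ∈ Finset.Icc (1:ℤ) m, (q^x-1) :=
    Finset.prod_pos fun x hx => hone x (by have := (Finset.mem_Icc.mp hx).1; omega)
  have hx1 : (0:ℝ) < q^(m+1)-1 := hone _ (by omega)
  have hP : 0 ≤ ∏ w ∈ Finset.Ico a (a+m-1), (q^w*t+1) :=
    Finset.prod_nonneg fun w _ => by have := mul_pos (zpow_pos hq0 w) ht0; linarith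
  have hN1 : 0 ≤ ∏ x ∈ Finset.Icc (1:ℤ) (k+1), (q^(m+x)-1) :=
    Finset.prod_nonneg fun x hx => le_of_lt (hone _ (by have := (Finset.mem_Icc.mp hx).1; omega))
  have hC : 0 ≤ ∏ w ∈ Finset.Ico (a+1) (a+m), (q^w-1) :=
    Finset.prod_nonneg fun w hw => le_of_lt (hone _ (by have := (Finset.mem_Ico.mp hw).1; omega))
  have efirst : (∏ x ∈ Finset.Icc (1:ℤ) (k+1), (q^(m+1+x)-1)) / (∏ x ∈ Finset.Icc (1:ℤ) (k+1), (q^x-1))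
      = (∏ x ∈ Finset.Icc (1:ℤ) (k+1), (q^(m+x)-1)) * (q^(i+2)-1) /
        ((∏ x ∈ Finset.Icc (1:ℤ) (k+1), (q^x-1)) * (q^(m+1)-1)) := by
    rw [div_eq_div_iff hDk.ne' (mul_pos hDk hx1).ne']
    linear_combination (∏ x ∈ Finset.Icc (1:ℤ) (k+1), (q^x-1)) * eN
  rw [r2, r3, r4, efirst, zpow_add₀ (ne_of_gt hq0) (m^2) (2*m+1)]
  set P := ∏ w ∈ Finset.Ico a (a+m-1), (q^w*t+1) with hPdef
  set N1 := ∏ x ∈ Finset.Icc (1:ℤ) (k+1), (q^(m+x)-1) with hN1def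
  set C := ∏ w ∈ Finset.Ico (a+1) (a+m), (q^w-1) with hCdef
  set Dk := ∏ x ∈ Finset.Icc (1:ℤ) (k+1), (q^x-1) with hDkdef
  set Dm := ∏ x ∈ Finset.Icc (1:ℤ) m, (q^x-1) with hDmdef
  have key := scalar_key q t hq2 ht1 e htt a m i (by omega) (by omega) (by omega)
    (by omega) (by omega)
  have hK : 0 ≤ P * (q^(m^2) * (N1 * C)) :=
    mul_nonneg hP (mul_nonneg (le_of_lt (zpow_pos hq0 _)) (mul_nonneg hN1 hC))
  have hD : 0 < Dk * (Dm * ((q^(m+1)-1) * (q^(m+1)-1))) :=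
    mul_pos hDk (mul_pos hDm (mul_pos hx1 hx1))
  have eqL : P * (q^(a+m-1)*t+1) * (q^(m^2) * (N1/Dk) * (C * (q^(a+m)-1) / Dm)) =
      ((q^(a+m-1)*t+1) * ((q^(a+m)-1) * ((q^(m+1)-1) * (q^(m+1)-1))) *
        (P * (q^(m^2) * (N1 * C)))) / (Dk * (Dm * ((q^(m+1)-1) * (q^(m+1)-1)))) := by
    field_simp
  have eqR : (q^(a-2)*t+1) * ((q^(a-1)*t+1) * P) *
      (q^(m^2) * q^(2*m+1) * (N1 * (q^(i+2)-1) / (Dk*(q^(m+1)-1))) *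
        ((q^(a-1)-1)*((q^a-1)*C)/(Dm*(q^(m+1)-1)))) =
      ((q^(a-2)*t+1) * ((q^(a-1)*t+1) * (q^(2*m+1) * ((q^(i+2)-1) * ((q^(a-1)-1) * (q^a-1))))) *
        (P * (q^(m^2) * (N1 * C)))) / (Dk * (Dm * ((q^(m+1)-1)*(q^(m+1)-1)))) := by
    field_simp
  rw [eqL, eqR]
  exact div_le_div_of_nonneg_right (mul_le_mul_of_nonneg_right key hK) hD.le
end

section
/- Let i, j be integers with (n−2)/2 ≤ i < j ≤ n−1. Then ξ(i) > ξ(j). -/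
/-!
Put `m = n − i − 1` and `a = 2i − n + 3`, so that `ξ(i) = s^{m²} ∏_{u<m}(s^u t + 1)
∏_{u=m+1}^{m+a−1}(s^u − 1) / ∏_{u=1}^{a−1}(s^u − 1)`. Passing from `i` to `i + 1` replaces
`(m + 1, a)` by `(m, a + 2)`, and the ratio of consecutive values is
`s^{2m+1}(s^m t + 1)(s^a − 1)(s^{a+1} − 1) / ((s^{m+1} − 1)(s^{m+a+1} − 1))`.
Since `s^k − 1 ≥ s^{k−1}` for `s ≥ 2` and `t ≥ 1`, the numerator is at least `s^{3m+2a}` while the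
denominator is below `s^{2m+a+2}`, so the ratio exceeds `1` once `m, a ≥ 1`.
The last step, to `ξ(n − 1) = 0`, holds because all the other values are positive.
-/

open Finset

/-- `ξ(i)`, the degree of the graph `(Δ_i, ⊥_max)`:
`ξ(i) = s^{(n−i−1)²} · ∏_{u=0}^{n−i−2}(s^u·t+1) · ∏_{u=n−i}^{i+1}(s^u−1) / ∏_{u=1}^{2i−n+2}(s^u−1)`
for `(n−2)/2 ≤ i ≤ n−2`, and `ξ(n−1) = 0`. -/
noncomputable def xi (n s e : ℕ) (i : ℤ) : ℝ :=
  if i = (n:ℤ) - 1 then 0 else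
    (s:ℝ) ^ (((n:ℤ) - i - 1)^2) *
    (∏ u ∈ Finset.Icc (0:ℤ) ((n:ℤ) - i - 2), ((s:ℝ) ^ u * tval s e + 1)) *
    (∏ u ∈ Finset.Icc ((n:ℤ) - i) (i + 1), ((s:ℝ) ^ u - 1)) /
    (∏ u ∈ Finset.Icc (1:ℤ) (2*i - (n:ℤ) + 2), ((s:ℝ) ^ u - 1))

lemma prod_Icc_add_one_right {M : Type*} [CommMonoid M] {a b : ℤ} (h : a ≤ b + 1)
    (f : ℤ → M) : ∏ x ∈ Icc a (b + 1), f x = (∏ x ∈ Icc a b, f x) * f (b + 1) := by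
  rw [← insert_Icc_right_eq_Icc_add_one h, prod_insert (by simp), mul_comm]

lemma prod_Icc_eq_mul_prod_Icc_add_one {M : Type*} [CommMonoid M] {a b : ℤ} (h : a ≤ b)
    (f : ℤ → M) : ∏ x ∈ Icc a b, f x = f a * ∏ x ∈ Icc (a + 1) b, f x := by
  rw [← insert_Icc_add_one_left_eq_Icc h, prod_insert (by simp)]

lemma zpow_sub_one_le_zpow_sub_one {s : ℝ} (hs : 2 ≤ s) {k : ℤ} (hk : 1 ≤ k) :
    s ^ (k - 1) ≤ s ^ k - 1 := by
  have hpos : 1 ≤ s ^ (k - 1) := one_le_zpow₀ (by linarith) (by omega)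
  have hk : s ^ k = s ^ (k - 1) * s := by
    rw [← zpow_add_one₀ (by positivity), sub_add_cancel]
  nlinarith

lemma one_le_tval {s : ℕ} (hs : 1 ≤ s) (e : ℕ) : 1 ≤ tval s e :=
  Real.one_le_rpow (by exact_mod_cast hs) (by positivity)

lemma zpow_sub_one_mul_zpow_sub_one_lt {s t : ℝ} (hs : 2 ≤ s) (ht : 1 ≤ t) {m a : ℤ}
    (hm : 1 ≤ m) (ha : 1 ≤ a) :
    (s ^ (m + 1) - 1) * (s ^ (m + a + 1) - 1) <
      s ^ (2 * m + 1) * (s ^ m * t + 1) * (s ^ a - 1) * (s ^ (a + 1) - 1) := by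
  have hs0 : s ≠ 0 := by positivity
  have h1 : 1 ≤ s ^ (m + 1) := one_le_zpow₀ (by linarith) (by omega)
  have h2 : 1 ≤ s ^ (m + a + 1) := one_le_zpow₀ (by linarith) (by omega)
  calc (s ^ (m + 1) - 1) * (s ^ (m + a + 1) - 1)
      < s ^ (m + 1) * s ^ (m + a + 1) := by nlinarith
    _ = s ^ (2 * m + a + 2) := by rw [← zpow_add₀ hs0]; ring_nf
    _ ≤ s ^ (3 * m + 2 * a) := zpow_le_zpow_right₀ (by linarith) (by omega)
    _ = s ^ (2 * m + 1) * s ^ m * s ^ (a - 1) * s ^ (a + 1 - 1) := by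
      simp only [← zpow_add₀ hs0]; ring_nf
    _ ≤ s ^ (2 * m + 1) * (s ^ m * t + 1) * (s ^ a - 1) * (s ^ (a + 1) - 1) := by
      have hsm : 0 < s ^ m := by positivity
      have ha₀ : 0 ≤ s ^ a - 1 := sub_nonneg.2 (one_le_zpow₀ (by linarith) (by omega))
      gcongr
      · nlinarith
      · exact zpow_sub_one_le_zpow_sub_one hs ha
      · exact zpow_sub_one_le_zpow_sub_one hs (by omega)

noncomputable def xiFormula (s t : ℝ) (m a : ℤ) : ℝ :=
  s ^ (m ^ 2) * (∏ u ∈ Icc 0 (m - 1), (s ^ u * t + 1)) *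
    (∏ u ∈ Icc (m + 1) (m + a - 1), (s ^ u - 1)) / ∏ u ∈ Icc 1 (a - 1), (s ^ u - 1)

lemma xiFormula_pos {s t : ℝ} (hs : 1 < s) (ht : 0 < t) {m : ℤ} (hm : 0 ≤ m) (a : ℤ) :
    0 < xiFormula s t m a := by
  have hf : ∀ u ∈ Icc (m + 1) (m + a - 1), 0 < s ^ u - 1 := fun u hu =>
    sub_pos.2 (one_lt_zpow₀ hs (by simp at hu; omega))
  have hd : ∀ u ∈ Icc 1 (a - 1), 0 < s ^ u - 1 := fun u hu =>
    sub_pos.2 (one_lt_zpow₀ hs (by simp at hu; omega))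
  have hs0 : 0 < s := by linarith
  have hg : 0 < ∏ u ∈ Icc 0 (m - 1), (s ^ u * t + 1) := prod_pos fun u _ => by positivity
  unfold xiFormula
  have hF := prod_pos hf
  have hD := prod_pos hd
  positivity

lemma xiFormula_mul_eq {s t : ℝ} (hs : 1 < s) {m a : ℤ} (hm : 0 ≤ m) (ha : 1 ≤ a) :
    xiFormula s t m (a + 2) *
        (s ^ (2 * m + 1) * (s ^ m * t + 1) * (s ^ a - 1) * (s ^ (a + 1) - 1)) =
      xiFormula s t (m + 1) a * ((s ^ (m + 1) - 1) * (s ^ (m + a + 1) - 1)) := by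
  have hs0 : s ≠ 0 := by positivity
  have hd : ∀ u ∈ Icc 1 (a + 1), s ^ u - 1 ≠ 0 := fun u hu =>
    (sub_pos.2 (one_lt_zpow₀ hs (by simp at hu; omega))).ne'
  have hd₀ : ∏ u ∈ Icc 1 (a - 1), (s ^ u - 1) ≠ 0 :=
    prod_ne_zero_iff.2 fun u hu => hd u (by simp at hu ⊢; omega)
  have hda := hd a (by simp; omega)
  have hda₁ := hd (a + 1) (by simp; omega)
  have hG : ∏ u ∈ Icc 0 (m + 1 - 1), (s ^ u * t + 1) =
      (∏ u ∈ Icc 0 (m - 1), (s ^ u * t + 1)) * (s ^ m * t + 1) := by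
    rw [show m + 1 - 1 = m - 1 + 1 by ring, prod_Icc_add_one_right (by omega), sub_add_cancel]
  have hF : ∏ u ∈ Icc (m + 1) (m + (a + 2) - 1), (s ^ u - 1) =
      (s ^ (m + 1) - 1) * (∏ u ∈ Icc (m + 1 + 1) (m + 1 + a - 1), (s ^ u - 1)) *
        (s ^ (m + a + 1) - 1) := by
    rw [show m + (a + 2) - 1 = m + 1 + a - 1 + 1 by ring, prod_Icc_add_one_right (by omega),
      prod_Icc_eq_mul_prod_Icc_add_one (by omega), show m + 1 + a - 1 + 1 = m + a + 1 by ring]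
  have hD : ∏ u ∈ Icc 1 (a + 2 - 1), (s ^ u - 1) =
      (∏ u ∈ Icc 1 (a - 1), (s ^ u - 1)) * (s ^ a - 1) * (s ^ (a + 1) - 1) := by
    rw [show a + 2 - 1 = a - 1 + 1 + 1 by ring, prod_Icc_add_one_right (by omega),
      prod_Icc_add_one_right (by omega), sub_add_cancel]
  have hS : s ^ ((m + 1) ^ 2) = s ^ (m ^ 2) * s ^ (2 * m + 1) := by
    rw [← zpow_add₀ hs0]; ring_nf
  unfold xiFormula
  rw [hG, hF, hD, hS]
  generalize ∏ u ∈ Icc 0 (m - 1), (s ^ u * t + 1) = G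
  generalize ∏ u ∈ Icc (m + 1 + 1) (m + 1 + a - 1), (s ^ u - 1) = F
  field_simp

lemma xiFormula_lt {s t : ℝ} (hs : 2 ≤ s) (ht : 1 ≤ t) {m a : ℤ} (hm : 1 ≤ m) (ha : 1 ≤ a) :
    xiFormula s t m (a + 2) < xiFormula s t (m + 1) a := by
  have hR : 0 < s ^ (2 * m + 1) * (s ^ m * t + 1) * (s ^ a - 1) * (s ^ (a + 1) - 1) :=
    mul_pos (mul_pos (by positivity) (sub_pos.2 (one_lt_zpow₀ (by linarith) (by omega))))
      (sub_pos.2 (one_lt_zpow₀ (by linarith) (by omega)))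
  refine lt_of_mul_lt_mul_right ?_ hR.le
  rw [xiFormula_mul_eq (by linarith) (by omega) ha]
  exact mul_lt_mul_of_pos_left (zpow_sub_one_mul_zpow_sub_one_lt hs ht hm ha)
    (xiFormula_pos (by linarith) (by linarith) (by omega) a)

lemma xi_eq_xiFormula {n s e : ℕ} {i m a : ℤ} (hi : i ≠ n - 1) (hm : m = n - i - 1)
    (ha : a = 2 * i - n + 3) : xi n s e i = xiFormula s (tval s e) m a := by
  rw [xi, if_neg hi, xiFormula, show (n:ℤ) - i - 2 = m - 1 by omega,
    show (n:ℤ) - i - 1 = m by omega, show (n:ℤ) - i = m + 1 by omega,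
    show i + 1 = m + a - 1 by omega, show 2 * i - (n:ℤ) + 2 = a - 1 by omega]

lemma xi_pos {n s : ℕ} (hs : 2 ≤ s) (e : ℕ) {i : ℤ} (hi : i ≤ n - 2) : 0 < xi n s e i := by
  rw [xi_eq_xiFormula (by omega) rfl rfl]
  exact xiFormula_pos (by exact_mod_cast hs) (tval_pos (by omega) e) (by omega) _

lemma xi_add_one_lt {n s : ℕ} (hs : 2 ≤ s) (e : ℕ) {i : ℤ} (h₁ : n - 2 ≤ 2 * i)
    (h₂ : i ≤ n - 2) : xi n s e (i + 1) < xi n s e i := by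
  by_cases hlast : i + 1 = n - 1
  · rw [show xi n s e (i + 1) = 0 by simp [xi, hlast]]
    exact xi_pos hs e h₂
  rw [xi_eq_xiFormula (m := n - i - 2) (a := 2 * i - n + 3 + 2) hlast (by ring) (by ring),
    xi_eq_xiFormula (m := n - i - 2 + 1) (a := 2 * i - n + 3) (by omega) (by ring) rfl]
  exact xiFormula_lt (by exact_mod_cast hs) (one_le_tval (by omega) e) (by omega) (by omega)

theorem stmt_18_general (n s e : ℕ) (hs : 2 ≤ s)
    (i j : ℤ) (hi : ((n:ℝ) - 2) / 2 ≤ (i:ℝ)) (hij : i < j) (hj : j ≤ (n:ℤ) - 1) :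
    xi n s e i > xi n s e j := by
  have h2i : (n:ℤ) - 2 ≤ 2 * i := by
    have : (n:ℝ) - 2 ≤ 2 * i := by linarith
    exact_mod_cast this
  have anti : StrictAntiOn (xi n s e) (Set.Icc i (n - 1)) :=
    strictAntiOn_of_add_one_lt Set.ordConnected_Icc fun k _ hk hk₁ =>
      xi_add_one_lt hs e (by linarith [hk.1]) (by linarith [hk₁.2])
  exact anti ⟨le_rfl, hij.le.trans hj⟩ ⟨hij.le, hj⟩ hij

theorem stmt_18 (n s e : ℕ) (hn : 3 ≤ n) (hs : 2 ≤ s) (he : e ≤ 4)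
    (i j : ℤ) (hi : ((n:ℝ) - 2) / 2 ≤ (i:ℝ)) (hij : i < j) (hj : j ≤ (n:ℤ) - 1) :
    xi n s e i > xi n s e j :=
  stmt_18_general n s e hs i j hi hij hj
end
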